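/- Let ℤ[i] = {a + bi : a, b ∈ ℤ} ⊆ ℂ, let α ∈ ℤ[i] \ {0}, and let φ_α(z) = exp(2πiz/α). For p ∈ ℤ[i], let T_p = {z ∈ ℂ : |Re(z − p)| ≤ 1/2 and |Im(z − p)| ≤ 1/2} be the closed unit square centered at p. Then for all p, q ∈ ℤ[i]: φ_α(T_p) = φ_α(T_q) if and only if φ_α(p) = φ_α(q) (equivalently, if and only if q = p + kα for some k ∈ ℤ). In particular the map sending the image of a tile under φ_α to the image of its center under φ_α is a well-defined bijection between {φ_α(T_p) : p ∈ ℤ[i]} and {φ_α(p) : p ∈ ℤ[i]}. -/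

import Mathlib

/-- The conformal map `φ_α(z) = exp(2πiz/α)`. -/
noncomputable def phi (α z : ℂ) : ℂ := Complex.exp (2 * (Real.pi : ℂ) * Complex.I * z / α)

/-- The Gaussian integers, viewed as a subset of `ℂ`. -/
def ZI : Set ℂ := {z : ℂ | ∃ a b : ℤ, z = (a : ℂ) + (b : ℂ) * Complex.I}

/-- The closed unit square centered at `p`. -/
def Tsq (p : ℂ) : Set ℂ := {z : ℂ | |(z - p).re| ≤ 1 / 2 ∧ |(z - p).im| ≤ 1 / 2}

/-! `φ_α` is periodic with period lattice `ℤα`, and a tile contains no Gaussian integer other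
than its center; so the image of `T_p` contains `φ_α(q)` only when `q ≡ p (mod ℤα)`, while
translating by `kα` does not change the image of a tile. -/

theorem Set.exists_bijOn_image_of_eq_iff_eq {ι α β : Type*} [Nonempty ι] {f : ι → α}
    {g : ι → β} {s : Set ι} (h : ∀ i ∈ s, ∀ j ∈ s, f i = f j ↔ g i = g j) :
    ∃ σ : α → β, (∀ i ∈ s, σ (f i) = g i) ∧ Set.BijOn σ (f '' s) (g '' s) := by
  have hσ : ∀ i ∈ s, g (Function.invFunOn f s (f i)) = g i := fun i hi =>
    have hex : ∃ j ∈ s, f j = f i := ⟨i, hi, rfl⟩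
    (h _ (Function.invFunOn_mem hex) i hi).mp (Function.invFunOn_eq hex)
  refine ⟨g ∘ Function.invFunOn f s, hσ, ?_, ?_, ?_⟩
  · rintro _ ⟨i, hi, rfl⟩
    exact ⟨i, hi, (hσ i hi).symm⟩
  · rintro _ ⟨i, hi, rfl⟩ _ ⟨j, hj, rfl⟩ hij
    exact (h i hi j hj).mpr ((hσ i hi).symm.trans (hij.trans (hσ j hj)))
  · rintro _ ⟨i, hi, rfl⟩
    exact ⟨f i, ⟨i, hi, rfl⟩, hσ i hi⟩

theorem phi_eq_phi_iff {α : ℂ} (hα : α ≠ 0) {z w : ℂ} :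
    phi α z = phi α w ↔ ∃ k : ℤ, w = z + (k : ℂ) * α := by
  rw [phi, phi, Complex.exp_eq_exp_iff_exists_int]
  refine ⟨fun ⟨n, hn⟩ => ⟨-n, ?_⟩, fun ⟨k, hk⟩ => ⟨-k, ?_⟩⟩
  · field_simp at hn
    push_cast
    linear_combination -hn
  · subst hk
    push_cast
    field_simp
    ring

theorem phi_add_intCast_mul {α : ℂ} (hα : α ≠ 0) (z : ℂ) (k : ℤ) :
    phi α (z + k * α) = phi α z :=
  ((phi_eq_phi_iff hα).mpr ⟨k, rfl⟩).symm

theorem image_add_right_Tsq (p c : ℂ) : (· + c) '' Tsq p = Tsq (p + c) := by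
  ext z
  simp only [Set.image_add_right, Set.mem_preimage, Tsq, Set.mem_ofPred_eq]
  rw [show z + -c - p = z - (p + c) by ring]

theorem image_phi_Tsq_add_intCast_mul {α : ℂ} (hα : α ≠ 0) (p : ℂ) (k : ℤ) :
    phi α '' Tsq (p + k * α) = phi α '' Tsq p := by
  rw [← image_add_right_Tsq, Set.image_image]
  simp_rw [phi_add_intCast_mul hα]

namespace ZI

theorem sub_mem {x y : ℂ} (hx : x ∈ ZI) (hy : y ∈ ZI) : x - y ∈ ZI := by
  obtain ⟨a, b, rfl⟩ := hx
  obtain ⟨c, d, rfl⟩ := hy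
  exact ⟨a - c, b - d, by push_cast; ring⟩

theorem intCast_mul_mem (k : ℤ) {x : ℂ} (hx : x ∈ ZI) : (k : ℂ) * x ∈ ZI := by
  obtain ⟨a, b, rfl⟩ := hx
  exact ⟨k * a, k * b, by push_cast; ring⟩

theorem eq_zero_of_mem_Tsq_zero {v : ℂ} (hv : v ∈ ZI) (hT : v ∈ Tsq 0) : v = 0 := by
  obtain ⟨a, b, rfl⟩ := hv
  obtain ⟨hre, him⟩ := hT
  simp only [sub_zero, Complex.add_re, Complex.add_im, Complex.intCast_re, Complex.intCast_im,
    Complex.mul_re, Complex.mul_im, Complex.I_re, Complex.I_im,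
    mul_zero, mul_one, sub_zero, add_zero, zero_add] at hre him
  have ha : a = 0 := Int.abs_lt_one_iff.mp (by exact_mod_cast (by linarith : |(a : ℝ)| < 1))
  have hb : b = 0 := Int.abs_lt_one_iff.mp (by exact_mod_cast (by linarith : |(b : ℝ)| < 1))
  simp [ha, hb]

theorem eq_of_mem_Tsq {z p : ℂ} (hz : z ∈ ZI) (hp : p ∈ ZI) (hT : z ∈ Tsq p) : z = p :=
  sub_eq_zero.mp <|
    eq_zero_of_mem_Tsq_zero (sub_mem hz hp) (by simpa [Tsq] using hT)

end ZI

theorem image_phi_Tsq_eq_iff {α : ℂ} (hα : α ≠ 0) (hαZ : α ∈ ZI) {p q : ℂ} (hp : p ∈ ZI)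
    (hq : q ∈ ZI) : phi α '' Tsq p = phi α '' Tsq q ↔ phi α p = phi α q := by
  refine ⟨fun h => ?_, fun h => ?_⟩
  · obtain ⟨z, hzT, hzq⟩ : phi α q ∈ phi α '' Tsq p := h ▸ ⟨q, by simp [Tsq], rfl⟩
    obtain ⟨k, rfl⟩ := (phi_eq_phi_iff hα).mp hzq
    have hzZ : z ∈ ZI := by simpa using ZI.sub_mem hq (ZI.intCast_mul_mem k hαZ)
    obtain rfl := ZI.eq_of_mem_Tsq hzZ hp hzT
    exact hzq
  · obtain ⟨k, rfl⟩ := (phi_eq_phi_iff hα).mp h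
    exact (image_phi_Tsq_add_intCast_mul hα p k).symm

theorem stmt8 (α : ℂ) (hα : α ≠ 0) (hαZ : α ∈ ZI) :
    (∀ p ∈ ZI, ∀ q ∈ ZI,
      (phi α '' Tsq p = phi α '' Tsq q ↔ phi α p = phi α q) ∧
      (phi α p = phi α q ↔ ∃ k : ℤ, q = p + (k : ℂ) * α)) ∧
    ∃ σ : Set ℂ → ℂ, (∀ p ∈ ZI, σ (phi α '' Tsq p) = phi α p) ∧
      Set.BijOn σ {S : Set ℂ | ∃ p ∈ ZI, S = phi α '' Tsq p}
        {w : ℂ | ∃ p ∈ ZI, w = phi α p} := by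
  refine ⟨fun p hp q hq => ⟨image_phi_Tsq_eq_iff hα hαZ hp hq, phi_eq_phi_iff hα⟩, ?_⟩
  obtain ⟨σ, hσ, hbij⟩ := Set.exists_bijOn_image_of_eq_iff_eq (f := fun p => phi α '' Tsq p)
    (g := phi α) fun p hp q hq => image_phi_Tsq_eq_iff hα hαZ hp hq
  refine ⟨σ, hσ, ?_⟩
  simpa only [Set.image, eq_comm] using hbij
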